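/- Assume S_R − S_E has a positive eigenvalue, and let Q ∈ Ω satisfy Q Θ(Q) = Tr(Q Θ(Q)) · Q and λ_max(Θ(Q)) = Tr(Q Θ(Q)). Then: (i) rank(Θ(Q)) = rank(S_R − S_E) ≥ rank(Q); (ii) Q(S_R − S_E)Q is positive semidefinite; (iii) the Hermitian matrices Q + Q S_E Q and Q + Q S_R Q commute, i.e., (Q + Q S_E Q)(Q + Q S_R Q) = (Q + Q S_R Q)(Q + Q S_E Q). -/

import Mathlib

open Matrix
open scoped ComplexOrder

/-- The largest eigenvalue of a (Hermitian) complex matrix, expressed as the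
supremum of its real eigenvalues. -/
noncomputable def lamMax {n : ℕ} (A : Matrix (Fin n) (Fin n) ℂ) : ℝ :=
  sSup {t : ℝ | ∃ v : Fin n → ℂ, v ≠ 0 ∧ A *ᵥ v = (t : ℂ) • v}

/-!
Write `M = S_R - S_E`, `A = 1 + S_R Q` and `B = 1 + Q S_E`. The push-through identity
`S (1 + Q S)⁻¹ = (1 + S Q)⁻¹ S` gives `A Θ B = M`; hence `Θ` is Hermitian with the rank of `M`,
and `A Θ Aᴴ = M + M (B⁻¹ Q) M` with `B⁻¹ Q ⪰ 0`. At an eigenvector of `M` for a positive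
eigenvalue this quadratic form is positive, so `λ = λ_max(Θ) = Tr(Q Θ)` is positive.
Then `Q Θ = Θ Q = λ Q`, which gives `rank Q ≤ rank Θ` and
`Q M Q = (Q A) Θ (B Q) = λ (Q + Q S_R Q)(Q + Q S_E Q)`. The left side is Hermitian, so the two
positive semidefinite factors commute, and their product is positive semidefinite.
-/

open scoped MatrixOrder

namespace Matrix

variable {n : Type*} [Fintype n]

lemma star_conjTranspose_mulVec_dotProduct_mulVec {𝕜 : Type*} [RCLike 𝕜] (B C : Matrix n n 𝕜)
    (v : n → 𝕜) : star (Bᴴ *ᵥ v) ⬝ᵥ C *ᵥ (Bᴴ *ᵥ v) = star v ⬝ᵥ (B * C * Bᴴ) *ᵥ v := by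
  rw [star_mulVec, conjTranspose_conjTranspose, dotProduct_mulVec, vecMul_vecMul,
    ← dotProduct_mulVec, mulVec_mulVec, Matrix.mul_assoc]

lemma IsHermitian.ofReal_re_trace_mul {𝕜 : Type*} [RCLike 𝕜] {A B : Matrix n n 𝕜}
    (hA : A.IsHermitian) (hB : B.IsHermitian) :
    ((RCLike.re (A * B).trace : ℝ) : 𝕜) = (A * B).trace := by
  refine RCLike.conj_eq_iff_re.mp ?_
  rw [← RCLike.star_def, ← trace_conjTranspose, conjTranspose_mul, hA.eq, hB.eq, trace_mul_comm]

lemma rank_le_rank_of_mul_eq_smul {K : Type*} [Field K] {Q Θ : Matrix n n K} {c : K} (hc : c ≠ 0)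
    (h : Q * Θ = c • Q) : Q.rank ≤ Θ.rank := by
  have hQ : Q = (c⁻¹ • Q) * Θ := by
    rw [Matrix.smul_mul, h, smul_smul, inv_mul_cancel₀ hc, one_smul]
  rw [hQ]
  exact rank_mul_le_right _ _

lemma re_dotProduct_add_mul_mul_mulVec_pos {M K : Matrix n n ℂ} (hM : M.IsHermitian)
    (hK : K.PosSemidef) {t : ℝ} (ht : 0 < t) {v : n → ℂ} (hv : v ≠ 0)
    (hMv : M *ᵥ v = (t : ℂ) • v) : 0 < (star v ⬝ᵥ (M + M * K * M) *ᵥ v).re := by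
  have hvM : star v ᵥ* M = (t : ℂ) • star v := by
    rw [← hM.eq, ← star_mulVec, hMv, star_smul, Complex.star_def, Complex.conj_ofReal]
  have hexpand : star v ⬝ᵥ (M + M * K * M) *ᵥ v
      = t * (star v ⬝ᵥ v) + t * t * (star v ⬝ᵥ K *ᵥ v) := by
    rw [add_mulVec, dotProduct_add, hMv, ← mulVec_mulVec, hMv, mulVec_smul, dotProduct_smul,
      dotProduct_smul, ← mulVec_mulVec, dotProduct_mulVec (star v) M, hvM, smul_dotProduct]
    simp only [smul_eq_mul]
    ring
  have hvv := (Complex.lt_def.mp (dotProduct_star_self_pos_iff.mpr hv)).1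
  have hvKv := (Complex.le_def.mp (hK.dotProduct_mulVec_nonneg v)).1
  rw [hexpand, Complex.add_re, ← Complex.ofReal_mul, Complex.re_ofReal_mul, Complex.re_ofReal_mul]
  simp only [Complex.zero_re] at hvv hvKv
  positivity

lemma posSemidef_add_mul_mul {𝕜 : Type*} [RCLike 𝕜] {Q S : Matrix n n 𝕜} (hQ : Q.PosSemidef)
    (hS : S.PosSemidef) : (Q + Q * S * Q).PosSemidef :=
  hQ.add (by simpa only [hQ.1.eq] using hS.mul_mul_conjTranspose_same Q)

variable [DecidableEq n]

open scoped Matrix.Norms.L2Operator in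
lemma PosSemidef.mul_of_commute {A B : Matrix n n ℂ} (hA : A.PosSemidef) (hB : B.PosSemidef)
    (h : Commute A B) : (A * B).PosSemidef :=
  nonneg_iff_posSemidef.mp (h.mul_nonneg hA.nonneg hB.nonneg)

lemma mem_spectrum_real_iff_exists_mulVec_eq_smul {A : Matrix n n ℂ} {t : ℝ} :
    t ∈ spectrum ℝ A ↔ ∃ v : n → ℂ, v ≠ 0 ∧ A *ᵥ v = (t : ℂ) • v := by
  rw [← spectrum.algebraMap_mem_iff ℂ, ← spectrum_toLin',
    ← Module.End.hasEigenvalue_iff_mem_spectrum]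
  refine ⟨fun h => ?_, fun ⟨v, hv, hAv⟩ => ?_⟩
  · obtain ⟨v, hv⟩ := h.exists_hasEigenvector
    exact ⟨v, hv.2, Module.End.mem_eigenspace_iff.mp hv.1⟩
  · exact Module.End.hasEigenvalue_of_hasEigenvector ⟨Module.End.mem_eigenspace_iff.mpr hAv, hv⟩

lemma IsHermitian.exists_mem_spectrum_pos {A : Matrix n n ℂ} (hA : A.IsHermitian) {x : n → ℂ}
    (hx : 0 < (star x ⬝ᵥ A *ᵥ x).re) : ∃ t ∈ spectrum ℝ A, 0 < t := by
  by_contra! h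
  have hA0 : A ≤ 0 := by simpa using le_algebraMap_of_spectrum_le (r := (0 : ℝ)) h
  have hx' := (Complex.le_def.mp ((le_iff.mp hA0).dotProduct_mulVec_nonneg x)).1
  simp only [zero_sub, neg_mulVec, dotProduct_neg, Complex.zero_re, Complex.neg_re] at hx'
  linarith

lemma isUnit_det_one_add_mul {𝕜 : Type*} [RCLike 𝕜] {Q S : Matrix n n 𝕜} (hQ : Q.PosSemidef)
    (hS : S.PosSemidef) : IsUnit (1 + Q * S).det := by
  set R := CFC.sqrt Q
  have hR : Rᴴ = R := (CFC.sqrt_nonneg Q).posSemidef.1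
  have hRSR : (R * S * R).PosSemidef := by
    simpa only [hR] using hS.mul_mul_conjTranspose_same R
  -- Sylvester: `det (1 + R (R S)) = det (1 + (R S) R)`
  rw [← CFC.sqrt_mul_sqrt_self Q hQ.nonneg, Matrix.mul_assoc, det_one_add_mul_comm]
  exact (isUnit_iff_isUnit_det _).mp (PosDef.one.add_posSemidef hRSR).isUnit

lemma posSemidef_inv_one_add_mul_mul {𝕜 : Type*} [RCLike 𝕜] {Q S : Matrix n n 𝕜}
    (hQ : Q.PosSemidef) (hS : S.PosSemidef) : ((1 + Q * S)⁻¹ * Q).PosSemidef := by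
  have hdet := isUnit_det_one_add_mul hQ hS
  have hct : (1 + Q * S)⁻¹ᴴ = (1 + S * Q)⁻¹ := by
    rw [conjTranspose_nonsing_inv, conjTranspose_add, conjTranspose_one, conjTranspose_mul,
      hQ.1.eq, hS.1.eq]
  have hcongr : (1 + Q * S)⁻¹ * Q = (1 + Q * S)⁻¹ * (Q + Q * S * Q) * (1 + Q * S)⁻¹ᴴ := by
    rw [hct, show Q + Q * S * Q = Q * (1 + S * Q) by noncomm_ring, ← Matrix.mul_assoc,
      mul_nonsing_inv_cancel_right _ _ ((det_one_add_mul_comm Q S) ▸ hdet)]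
  rw [hcongr]
  exact (posSemidef_add_mul_mul hQ hS).mul_mul_conjTranspose_same _

lemma inv_one_add_mul_mul_comm {α : Type*} [CommRing α] {Q S : Matrix n n α}
    (h : IsUnit (1 + Q * S).det) : (1 + S * Q)⁻¹ * S = S * (1 + Q * S)⁻¹ := by
  have h' : IsUnit (1 + S * Q).det := det_one_add_mul_comm S Q ▸ h
  calc (1 + S * Q)⁻¹ * S = (1 + S * Q)⁻¹ * (S * (1 + Q * S)) * (1 + Q * S)⁻¹ := by
        rw [← Matrix.mul_assoc, mul_nonsing_inv_cancel_right _ _ h]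
    _ = (1 + S * Q)⁻¹ * ((1 + S * Q) * S) * (1 + Q * S)⁻¹ := by
        rw [show S * (1 + Q * S) = (1 + S * Q) * S by noncomm_ring]
    _ = S * (1 + Q * S)⁻¹ := by rw [nonsing_inv_mul_cancel_left _ _ h']

lemma isHermitian_mul_inv_one_add_mul {𝕜 : Type*} [RCLike 𝕜] {Q S : Matrix n n 𝕜}
    (hQ : Q.IsHermitian) (hS : S.IsHermitian) (h : IsUnit (1 + Q * S).det) :
    (S * (1 + Q * S)⁻¹).IsHermitian := by
  rw [IsHermitian, conjTranspose_mul, conjTranspose_nonsing_inv, conjTranspose_add,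
    conjTranspose_one, conjTranspose_mul, hQ.eq, hS.eq, inv_one_add_mul_mul_comm h]

end Matrix

lemma lamMax_eq_sSup_spectrum {n : ℕ} (A : Matrix (Fin n) (Fin n) ℂ) :
    lamMax A = sSup (spectrum ℝ A) := by
  rw [lamMax]
  congr 1
  ext t
  exact mem_spectrum_real_iff_exists_mulVec_eq_smul.symm

lemma lamMax_pos {n : ℕ} {A : Matrix (Fin n) (Fin n) ℂ} (hA : A.IsHermitian) {x : Fin n → ℂ}
    (hx : 0 < (star x ⬝ᵥ A *ᵥ x).re) : 0 < lamMax A := by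
  obtain ⟨t, ht, htpos⟩ := hA.exists_mem_spectrum_pos hx
  rw [lamMax_eq_sSup_spectrum]
  exact htpos.trans_le (le_csSup A.finite_real_spectrum.bddAbove ht)

section secrecyGradient

variable {n : Type*} [Fintype n] [DecidableEq n]

/-- The matrix `Θ(Q)` of the paper, the gradient of
`Q ↦ log det (1 + Q S_R) - log det (1 + Q S_E)`. -/
noncomputable def secrecyGradient {α : Type*} [CommRing α] (SR SE Q : Matrix n n α) :
    Matrix n n α :=
  SR * (1 + Q * SR)⁻¹ - SE * (1 + Q * SE)⁻¹

lemma one_add_mul_mul_secrecyGradient_mul_one_add_mul {α : Type*} [CommRing α]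
    {SR SE Q : Matrix n n α} (hdetR : IsUnit (1 + Q * SR).det) (hdetE : IsUnit (1 + Q * SE).det) :
    (1 + SR * Q) * secrecyGradient SR SE Q * (1 + Q * SE) = SR - SE := by
  have hR : (1 + SR * Q) * (SR * (1 + Q * SR)⁻¹) = SR := by
    rw [← inv_one_add_mul_mul_comm hdetR,
      mul_nonsing_inv_cancel_left _ _ (det_one_add_mul_comm SR Q ▸ hdetR)]
  rw [secrecyGradient, Matrix.mul_sub, Matrix.sub_mul, hR, Matrix.mul_assoc _ (SE * _),
    nonsing_inv_mul_cancel_right _ _ hdetE]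
  noncomm_ring

lemma rank_secrecyGradient {K : Type*} [Field K] {SR SE Q : Matrix n n K}
    (hdetR : IsUnit (1 + Q * SR).det) (hdetE : IsUnit (1 + Q * SE).det) :
    (secrecyGradient SR SE Q).rank = (SR - SE).rank := by
  rw [← one_add_mul_mul_secrecyGradient_mul_one_add_mul hdetR hdetE,
    rank_mul_eq_left_of_isUnit_det _ _ hdetE,
    rank_mul_eq_right_of_isUnit_det _ _ (det_one_add_mul_comm SR Q ▸ hdetR)]

variable {𝕜 : Type*} [RCLike 𝕜] {SR SE Q : Matrix n n 𝕜}

lemma isHermitian_secrecyGradient (hQ : Q.IsHermitian) (hSR : SR.IsHermitian)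
    (hSE : SE.IsHermitian) (hdetR : IsUnit (1 + Q * SR).det) (hdetE : IsUnit (1 + Q * SE).det) :
    (secrecyGradient SR SE Q).IsHermitian :=
  (isHermitian_mul_inv_one_add_mul hQ hSR hdetR).sub
    (isHermitian_mul_inv_one_add_mul hQ hSE hdetE)

lemma one_add_mul_mul_secrecyGradient_mul_conjTranspose (hQ : Q.IsHermitian)
    (hSR : SR.IsHermitian) (hdetR : IsUnit (1 + Q * SR).det) (hdetE : IsUnit (1 + Q * SE).det) :
    (1 + SR * Q) * secrecyGradient SR SE Q * (1 + SR * Q)ᴴ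
      = (SR - SE) + (SR - SE) * ((1 + Q * SE)⁻¹ * Q) * (SR - SE) := by
  have hfac := one_add_mul_mul_secrecyGradient_mul_one_add_mul hdetR hdetE
  have hct : (1 + SR * Q)ᴴ = (1 + Q * SE) + Q * (SR - SE) := by
    rw [conjTranspose_add, conjTranspose_one, conjTranspose_mul, hQ.eq, hSR.eq]
    noncomm_ring
  have hleft : (1 + SR * Q) * secrecyGradient SR SE Q = (SR - SE) * (1 + Q * SE)⁻¹ := by
    rw [← hfac, mul_nonsing_inv_cancel_right _ _ hdetE]
  rw [hct, Matrix.mul_add, hfac, hleft]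
  simp only [Matrix.mul_assoc]

lemma mul_sub_mul_eq_smul_of_secrecyGradient_mul_eq_smul (hdetR : IsUnit (1 + Q * SR).det)
    (hdetE : IsUnit (1 + Q * SE).det) {c : 𝕜} (hc : secrecyGradient SR SE Q * Q = c • Q) :
    Q * (SR - SE) * Q = c • ((Q + Q * SR * Q) * (Q + Q * SE * Q)) := by
  have hright : secrecyGradient SR SE Q * (Q + Q * SE * Q) = c • (Q + Q * SE * Q) := by
    rw [Matrix.mul_add, ← Matrix.mul_assoc, ← Matrix.mul_assoc, hc, smul_add, Matrix.smul_mul,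
      Matrix.smul_mul]
  rw [← one_add_mul_mul_secrecyGradient_mul_one_add_mul hdetR hdetE,
    show Q * ((1 + SR * Q) * secrecyGradient SR SE Q * (1 + Q * SE)) * Q
      = (Q + Q * SR * Q) * (secrecyGradient SR SE Q * (Q + Q * SE * Q)) by noncomm_ring,
    hright, Matrix.mul_smul]

lemma commute_of_secrecyGradient_mul_eq_smul (hQ : Q.PosSemidef) (hSR : SR.PosSemidef)
    (hSE : SE.PosSemidef) {c : ℝ} (hc : c ≠ 0) (hΘQ : secrecyGradient SR SE Q * Q = (c : 𝕜) • Q) :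
    Commute (Q + Q * SR * Q) (Q + Q * SE * Q) := by
  refine ((posSemidef_add_mul_mul hQ hSR).1.isSelfAdjoint.commute_iff
    (posSemidef_add_mul_mul hQ hSE).1.isSelfAdjoint).mpr ?_
  have hQMQ := isHermitian_mul_mul_conjTranspose Q (hSR.1.sub hSE.1)
  rw [hQ.1.eq, mul_sub_mul_eq_smul_of_secrecyGradient_mul_eq_smul (isUnit_det_one_add_mul hQ hSR)
    (isUnit_det_one_add_mul hQ hSE) hΘQ] at hQMQ
  let := invertibleOfNonzero (RCLike.ofReal_ne_zero (K := 𝕜).mpr hc)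
  exact hQMQ.of_smul (RCLike.conj_ofReal c)

end secrecyGradient

lemma lamMax_secrecyGradient_pos {n : ℕ} {SR SE Q : Matrix (Fin n) (Fin n) ℂ} (hQ : Q.PosSemidef)
    (hSR : SR.PosSemidef) (hSE : SE.PosSemidef) {t : ℝ} (ht : 0 < t) {v : Fin n → ℂ} (hv : v ≠ 0)
    (hMv : (SR - SE) *ᵥ v = (t : ℂ) • v) : 0 < lamMax (secrecyGradient SR SE Q) := by
  have hdetR := isUnit_det_one_add_mul hQ hSR
  have hdetE := isUnit_det_one_add_mul hQ hSE
  have hquad := re_dotProduct_add_mul_mul_mulVec_pos (hSR.1.sub hSE.1)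
    (posSemidef_inv_one_add_mul_mul hQ hSE) ht hv hMv
  rw [← one_add_mul_mul_secrecyGradient_mul_conjTranspose hQ.1 hSR.1 hdetR hdetE,
    ← star_conjTranspose_mulVec_dotProduct_mulVec] at hquad
  exact lamMax_pos (isHermitian_secrecyGradient hQ.1 hSR.1 hSE.1 hdetR hdetE) hquad

theorem stmt_11_general (nT nR nE : ℕ) (HR : Matrix (Fin nR) (Fin nT) ℂ)
    (HE : Matrix (Fin nE) (Fin nT) ℂ) (ρ : ℝ) (hρ : 0 < ρ)
    (SR SE Θ : Matrix (Fin nT) (Fin nT) ℂ)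
    (hSR : SR = (ρ : ℂ) • (HRᴴ * HR)) (hSE : SE = (ρ : ℂ) • (HEᴴ * HE))
    (hpos : ∃ (t : ℝ) (v : Fin nT → ℂ), 0 < t ∧ v ≠ 0 ∧
      (SR - SE) *ᵥ v = (t : ℂ) • v)
    (Q : Matrix (Fin nT) (Fin nT) ℂ) (hQ : Q.PosSemidef)
    (hΘ : Θ = SR * (1 + Q * SR)⁻¹ - SE * (1 + Q * SE)⁻¹)
    (heq1 : Q * Θ = (Q * Θ).trace • Q)
    (heq2 : lamMax Θ = (Q * Θ).trace.re) :
    Θ.rank = (SR - SE).rank ∧ Q.rank ≤ (SR - SE).rank ∧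
    (Q * (SR - SE) * Q).PosSemidef ∧
    (Q + Q * SE * Q) * (Q + Q * SR * Q) = (Q + Q * SR * Q) * (Q + Q * SE * Q) := by
  obtain rfl : Θ = secrecyGradient SR SE Q := hΘ
  have hρ' : (0 : ℂ) ≤ ρ := by exact_mod_cast hρ.le
  have hSRpsd : SR.PosSemidef := hSR ▸ (posSemidef_conjTranspose_mul_self HR).smul hρ'
  have hSEpsd : SE.PosSemidef := hSE ▸ (posSemidef_conjTranspose_mul_self HE).smul hρ'
  have hdetR := isUnit_det_one_add_mul hQ hSRpsd
  have hdetE := isUnit_det_one_add_mul hQ hSEpsd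
  have hΘherm := isHermitian_secrecyGradient hQ.1 hSRpsd.1 hSEpsd.1 hdetR hdetE
  set c := (Q * secrecyGradient SR SE Q).trace.re
  have hc : 0 < c := by
    obtain ⟨t, v, ht, hv, hMv⟩ := hpos
    exact heq2 ▸ lamMax_secrecyGradient_pos hQ hSRpsd hSEpsd ht hv hMv
  have hQΘ : Q * secrecyGradient SR SE Q = (c : ℂ) • Q := by
    rw [heq1]
    exact congrArg (· • Q) (hQ.1.ofReal_re_trace_mul hΘherm).symm
  have hΘQ : secrecyGradient SR SE Q * Q = (c : ℂ) • Q := by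
    simpa [hQ.1.eq, hΘherm.eq] using congrArg conjTranspose hQΘ
  have hcomm := commute_of_secrecyGradient_mul_eq_smul hQ hSRpsd hSEpsd hc.ne' hΘQ
  refine ⟨rank_secrecyGradient hdetR hdetE, ?_, ?_, hcomm.eq.symm⟩
  · exact (rank_le_rank_of_mul_eq_smul (by exact_mod_cast hc.ne') hQΘ).trans
      (rank_secrecyGradient hdetR hdetE).le
  · rw [mul_sub_mul_eq_smul_of_secrecyGradient_mul_eq_smul hdetR hdetE hΘQ]
    exact ((posSemidef_add_mul_mul hQ hSRpsd).mul_of_commute (posSemidef_add_mul_mul hQ hSEpsd)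
      hcomm).smul (by exact_mod_cast hc.le)

/-- If `S_R − S_E` has a positive eigenvalue and `Q ∈ Ω` satisfies
the optimality equations `Q Θ(Q) = Tr(Q Θ(Q)) Q`, `λ_max(Θ(Q)) = Tr(Q Θ(Q))`,
then (i) `rank(Θ(Q)) = rank(S_R − S_E) ≥ rank(Q)`; (ii) `Q(S_R − S_E)Q ⪰ 0`;
(iii) `Q + Q S_E Q` and `Q + Q S_R Q` commute. -/
theorem stmt_11 (nT nR nE : ℕ) (HR : Matrix (Fin nR) (Fin nT) ℂ)
    (HE : Matrix (Fin nE) (Fin nT) ℂ) (ρ : ℝ) (hρ : 0 < ρ)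
    (SR SE Θ : Matrix (Fin nT) (Fin nT) ℂ)
    (hSR : SR = (ρ : ℂ) • (HRᴴ * HR)) (hSE : SE = (ρ : ℂ) • (HEᴴ * HE))
    (hpos : ∃ (t : ℝ) (v : Fin nT → ℂ), 0 < t ∧ v ≠ 0 ∧
      (SR - SE) *ᵥ v = (t : ℂ) • v)
    (Q : Matrix (Fin nT) (Fin nT) ℂ) (hQ : Q.PosSemidef) (htr : Q.trace = 1)
    (hΘ : Θ = SR * (1 + Q * SR)⁻¹ - SE * (1 + Q * SE)⁻¹)
    (heq1 : Q * Θ = (Q * Θ).trace • Q)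
    (heq2 : lamMax Θ = (Q * Θ).trace.re) :
    Θ.rank = (SR - SE).rank ∧ Q.rank ≤ (SR - SE).rank ∧
    (Q * (SR - SE) * Q).PosSemidef ∧
    (Q + Q * SE * Q) * (Q + Q * SR * Q) = (Q + Q * SR * Q) * (Q + Q * SE * Q) :=
  stmt_11_general nT nR nE HR HE ρ hρ SR SE Θ hSR hSE hpos Q hQ hΘ heq1 heq2
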